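/- Fix a ∈ [0.9, 1] and ε with 0 < ε < 0.05 and a/2 + 4√ε ≤ 1/2. Let G(x) = (3x−1)(x+1)/(3x²) and define F₂ₐ on (1/3, 1/2] by: F₂ₐ(x) = G(x) for 1/3 < x ≤ a/2; F₂ₐ(x) = G(x) − (1/2)(x − a/2)² for a/2 < x ≤ a/2 + √ε; F₂ₐ(x) = G(x) − ε + (1/2)(x − a/2 − 2√ε)² for a/2 + √ε < x ≤ a/2 + 3√ε; F₂ₐ(x) = G(x) − (1/2)(x − a/2 − 4√ε)² for a/2 + 3√ε < x ≤ a/2 + 4√ε; and F₂ₐ(x) = G(x) for a/2 + 4√ε < x ≤ 1/2. Then at every x ∈ (1/3, 1/2) at which F₂ₐ is twice differentiable (i.e., every x in the interior of one of these five pieces), the inequality 2·F₂ₐ'(x)² + (1 − F₂ₐ(x))·F₂ₐ''(x) ≥ 0 holds. -/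

import Mathlib

/-!
For the baseline `G = G23` one computes `2 G'² + (1 - G) G'' = 2/(9x⁶)`, which is at least
`128/9 > 14` on `(0, 1/2]`. Near a point of an open piece, `F2A` is `G23 + b ± (y - m)²/2`, so
compared with `G23` the first derivative moves by `|x - m|`, the second by `±1`, and `1 - F` by
`(x - m)²/2` or by `ε - (x - m)²/2 ∈ [0, ε]`. The constraints `0.9 ≤ a` and `a/2 + 4√ε ≤ 1/2` put
the perturbed pieces inside `[9/20, 1/2]` and force `√ε ≤ 1/80`; there `G' ∈ [0, 5]`,
`1 - G ∈ [0, 1/5]` and `G'' ∈ [-50, 0]`, so the perturbation costs less than the margin 14.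
-/

open Set

/-- The baseline CDF piece `G(x) = (3x−1)(x+1)/(3x²)`. -/
noncomputable def G23 : ℝ → ℝ := fun x => (3*x - 1)*(x + 1)/(3*x^2)

/-- The perturbed CDF `F₂ₐ`, a piecewise modification of `G23` on `[a/2, a/2 + 4√ε]`. -/
noncomputable def F2A (a ε : ℝ) : ℝ → ℝ := fun x =>
  if x ≤ a/2 then G23 x
  else if x ≤ a/2 + Real.sqrt ε then G23 x - (1/2)*(x - a/2)^2
  else if x ≤ a/2 + 3*Real.sqrt ε then G23 x - ε + (1/2)*(x - a/2 - 2*Real.sqrt ε)^2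
  else if x ≤ a/2 + 4*Real.sqrt ε then G23 x - (1/2)*(x - a/2 - 4*Real.sqrt ε)^2
  else G23 x

open Filter Topology

theorem deriv_deriv_of_eventuallyEq_add_quadratic {f f' f'' F : ℝ → ℝ} {x b q m : ℝ}
    (hf : ∀ᶠ y in 𝓝 x, HasDerivAt f (f' y) y) (hf' : HasDerivAt f' (f'' x) x)
    (hF : F =ᶠ[𝓝 x] fun y => f y + b + q*(y - m)^2) :
    deriv F x = f' x + 2*q*(x - m) ∧ deriv (deriv F) x = f'' x + 2*q := by
  have hquad (y : ℝ) : HasDerivAt (fun z => q*(z - m)^2) (2*q*(y - m)) y := by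
    simpa [mul_comm, mul_left_comm, mul_assoc] using
      (((hasDerivAt_id y).sub_const m).pow 2).const_mul q
  have hF' : deriv F =ᶠ[𝓝 x] fun y => f' y + 2*q*(y - m) := by
    filter_upwards [hF.deriv, hf] with y hy hfy
    exact hy.trans ((hfy.add_const b).add (hquad y)).deriv
  refine ⟨hF'.eq_of_nhds, ?_⟩
  have hlin : HasDerivAt (fun y => 2*q*(y - m)) (2*q) x := by
    simpa using ((hasDerivAt_id' x).sub_const m).const_mul (2*q)
  rw [hF'.deriv_eq]
  exact (hf'.add hlin).deriv

noncomputable def derivG23 (x : ℝ) : ℝ := 2*(1 - x)/(3*x^3)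

noncomputable def deriv2G23 (x : ℝ) : ℝ := (4*x - 6)/(3*x^4)

theorem hasDerivAt_G23 {x : ℝ} (hx : x ≠ 0) : HasDerivAt G23 (derivG23 x) x := by
  have hnum := (((hasDerivAt_id' x).const_mul 3).sub_const 1).mul ((hasDerivAt_id' x).add_const 1)
  have hden := (hasDerivAt_pow 2 x).const_mul 3
  refine (hnum.div hden (by positivity)).congr_deriv ?_
  simp only [derivG23, Pi.mul_apply]
  field_simp
  ring

theorem hasDerivAt_derivG23 {x : ℝ} (hx : x ≠ 0) : HasDerivAt derivG23 (deriv2G23 x) x := by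
  have hnum := ((hasDerivAt_id' x).const_sub 1).const_mul 2
  have hden := (hasDerivAt_pow 3 x).const_mul 3
  refine (hnum.div hden (by positivity)).congr_deriv ?_
  rw [deriv2G23]
  field_simp
  ring

theorem regularity_G23 {x : ℝ} (hx : x ≠ 0) :
    2*(derivG23 x)^2 + (1 - G23 x)*deriv2G23 x = 2/(9*x^6) := by
  simp only [derivG23, deriv2G23, G23]
  field_simp
  ring

theorem regularity_eq_of_eventuallyEq_G23_add_quadratic {F : ℝ → ℝ} {x b q m : ℝ} (hx : x ≠ 0)
    (hF : F =ᶠ[𝓝 x] fun y => G23 y + b + q*(y - m)^2) :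
    2*(deriv F x)^2 + (1 - F x) * deriv (deriv F) x =
      2*(derivG23 x + 2*q*(x - m))^2 + (1 - G23 x - b - q*(x - m)^2)*(deriv2G23 x + 2*q) := by
  have hG : ∀ᶠ y in 𝓝 x, HasDerivAt G23 (derivG23 y) y :=
    (eventually_ne_nhds hx).mono fun y hy => hasDerivAt_G23 hy
  obtain ⟨hF', hF''⟩ :=
    deriv_deriv_of_eventuallyEq_add_quadratic hG (hasDerivAt_derivG23 hx) hF
  rw [hF', hF'', hF.eq_of_nhds]
  ring

theorem derivG23_mem_Icc {x : ℝ} (hx : x ∈ Icc (9/20 : ℝ) (1/2)) :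
    derivG23 x ∈ Icc 0 5 := by
  obtain ⟨h1, h2⟩ := hx
  constructor
  · exact div_nonneg (by linarith) (by positivity)
  · rw [derivG23, div_le_iff₀ (by positivity)]
    nlinarith [pow_le_pow_left₀ (by norm_num : (0:ℝ) ≤ 9/20) h1 3]

theorem one_sub_G23_mem_Icc {x : ℝ} (hx : x ∈ Icc (9/20 : ℝ) (1/2)) :
    1 - G23 x ∈ Icc 0 (1/5) := by
  obtain ⟨h1, h2⟩ := hx
  have hQ : 1 - G23 x = (1 - 2*x)/(3*x^2) := by
    rw [G23]
    field_simp
    ring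
  rw [hQ]
  constructor
  · exact div_nonneg (by linarith) (by positivity)
  · rw [div_le_iff₀ (by positivity)]
    nlinarith

theorem deriv2G23_mem_Icc {x : ℝ} (hx : x ∈ Icc (9/20 : ℝ) (1/2)) :
    deriv2G23 x ∈ Icc (-50) 0 := by
  obtain ⟨h1, h2⟩ := hx
  constructor
  · rw [deriv2G23, le_div_iff₀ (by positivity)]
    nlinarith [pow_le_pow_left₀ (by norm_num : (0:ℝ) ≤ 9/20) h1 4]
  · exact div_nonpos_of_nonpos_of_nonneg (by linarith) (by positivity)

theorem fourteen_le_regularity_G23 {x : ℝ} (hx0 : 0 < x) (hx : x ≤ 1/2) :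
    14 ≤ 2*(derivG23 x)^2 + (1 - G23 x)*deriv2G23 x := by
  rw [regularity_G23 hx0.ne', le_div_iff₀ (by positivity)]
  nlinarith [pow_le_pow_left₀ hx0.le hx 6]

theorem regularity_nonneg_of_eventuallyEq_G23 {F : ℝ → ℝ} {x : ℝ} (hx : 0 < x)
    (hF : F =ᶠ[𝓝 x] G23) :
    0 ≤ 2*(deriv F x)^2 + (1 - F x) * deriv (deriv F) x := by
  rw [regularity_eq_of_eventuallyEq_G23_add_quadratic (b := 0) (q := 0) (m := 0) hx.ne'
    (hF.trans (.of_forall fun y => by ring))]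
  have hG := regularity_G23 hx.ne'
  have hpos : 0 < 2/(9*x^6) := by positivity
  linarith

theorem regularity_nonneg_of_eventuallyEq_G23_sub_half_sq {F : ℝ → ℝ} {x m : ℝ}
    (hx : x ∈ Icc (9/20 : ℝ) (1/2)) (hxm : |x - m| ≤ 1/80)
    (hF : F =ᶠ[𝓝 x] fun y => G23 y - (y - m)^2/2) :
    0 ≤ 2*(deriv F x)^2 + (1 - F x) * deriv (deriv F) x := by
  rw [regularity_eq_of_eventuallyEq_G23_add_quadratic (b := 0) (q := -1/2) (m := m)
    (by linarith [hx.1]) (hF.trans (.of_forall fun y => by ring))]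
  obtain ⟨hP0, hP5⟩ := derivG23_mem_Icc hx
  obtain ⟨hQ0, hQ1⟩ := one_sub_G23_mem_Icc hx
  obtain ⟨hR0, hR1⟩ := deriv2G23_mem_Icc hx
  have h14 := fourteen_le_regularity_G23 (by linarith [hx.1]) hx.2
  obtain ⟨ht0, ht1⟩ := abs_le.1 hxm
  nlinarith [mul_nonneg hP0 (by linarith : (0:ℝ) ≤ 1/80 - (x - m)),
    mul_nonneg (by linarith : (0:ℝ) ≤ 5 - derivG23 x) (by linarith : (0:ℝ) ≤ 1/80 - (x - m)),
    mul_nonneg (by linarith : (0:ℝ) ≤ deriv2G23 x + 50) (sq_nonneg (x - m)),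
    mul_nonneg (by linarith : (0:ℝ) ≤ 1/80 - (x - m)) (by linarith : (0:ℝ) ≤ 1/80 + (x - m))]

theorem regularity_nonneg_of_eventuallyEq_G23_sub_const_add_half_sq {F : ℝ → ℝ} {x m ε : ℝ}
    (hx : x ∈ Icc (9/20 : ℝ) (1/2)) (hε : 0 ≤ ε) (hxm : |x - m| ≤ √ε) (hε80 : √ε ≤ 1/80)
    (hF : F =ᶠ[𝓝 x] fun y => G23 y - ε + (y - m)^2/2) :
    0 ≤ 2*(deriv F x)^2 + (1 - F x) * deriv (deriv F) x := by
  rw [regularity_eq_of_eventuallyEq_G23_add_quadratic (b := -ε) (q := 1/2) (m := m)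
    (by linarith [hx.1]) (hF.trans (.of_forall fun y => by ring))]
  obtain ⟨hP0, hP5⟩ := derivG23_mem_Icc hx
  obtain ⟨hQ0, hQ1⟩ := one_sub_G23_mem_Icc hx
  obtain ⟨hR0, hR1⟩ := deriv2G23_mem_Icc hx
  have h14 := fourteen_le_regularity_G23 (by linarith [hx.1]) hx.2
  obtain ⟨ht0, ht1⟩ := abs_le.1 (hxm.trans hε80)
  have htε : (x - m)^2 ≤ ε := by
    simpa [sq_abs, Real.sq_sqrt hε] using pow_le_pow_left₀ (abs_nonneg _) hxm 2
  have hε6400 : ε ≤ 1/6400 := by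
    nlinarith [Real.sq_sqrt hε, Real.sqrt_nonneg ε]
  nlinarith [mul_nonneg hP0 (by linarith : (0:ℝ) ≤ 1/80 + (x - m)),
    mul_nonneg (by linarith : (0:ℝ) ≤ 5 - derivG23 x) (by linarith : (0:ℝ) ≤ 1/80 + (x - m)),
    mul_nonneg (by nlinarith : (0:ℝ) ≤ ε - (x - m)^2/2) (by linarith : (0:ℝ) ≤ deriv2G23 x + 50),
    sq_nonneg (x - m)]

section F2APieces

variable (a ε : ℝ)

theorem F2A_eqOn_Iio : EqOn (F2A a ε) G23 (Iio (a/2)) := fun y (hy : y < a/2) => by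
  simp only [F2A, if_pos hy.le]

theorem F2A_eqOn_Ioo_left :
    EqOn (F2A a ε) (fun y => G23 y - (y - a/2)^2/2) (Ioo (a/2) (a/2 + √ε)) := fun y hy => by
  simp only [F2A, if_neg (not_le.2 hy.1), if_pos hy.2.le]
  ring

theorem F2A_eqOn_Ioo_mid :
    EqOn (F2A a ε) (fun y => G23 y - ε + (y - (a/2 + 2*√ε))^2/2)
      (Ioo (a/2 + √ε) (a/2 + 3*√ε)) := fun y hy => by
  have hs := Real.sqrt_nonneg ε
  simp only [F2A, if_neg (by linarith [hy.1] : ¬ y ≤ a/2), if_neg (not_le.2 hy.1),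
    if_pos hy.2.le]
  ring

theorem F2A_eqOn_Ioo_right :
    EqOn (F2A a ε) (fun y => G23 y - (y - (a/2 + 4*√ε))^2/2)
      (Ioo (a/2 + 3*√ε) (a/2 + 4*√ε)) := fun y hy => by
  have hs := Real.sqrt_nonneg ε
  simp only [F2A, if_neg (by linarith [hy.1] : ¬ y ≤ a/2),
    if_neg (by linarith [hy.1] : ¬ y ≤ a/2 + √ε), if_neg (not_le.2 hy.1), if_pos hy.2.le]
  ring

theorem F2A_eqOn_Ioi : EqOn (F2A a ε) G23 (Ioi (a/2 + 4*√ε)) := fun y (hy : _ < y) => by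
  have hs := Real.sqrt_nonneg ε
  simp only [F2A, if_neg (by linarith : ¬ y ≤ a/2), if_neg (by linarith : ¬ y ≤ a/2 + √ε),
    if_neg (by linarith : ¬ y ≤ a/2 + 3*√ε), if_neg (not_le.2 hy)]

end F2APieces

theorem stmt3_general (a ε : ℝ) (ha : a ∈ Icc (0.9 : ℝ) 1) (hε : 0 < ε)
    (hfit : a/2 + 4*Real.sqrt ε ≤ 1/2) :
    ∀ x, (x ∈ Ioo (1/3 : ℝ) (a/2) ∨ x ∈ Ioo (a/2) (a/2 + Real.sqrt ε) ∨
          x ∈ Ioo (a/2 + Real.sqrt ε) (a/2 + 3*Real.sqrt ε) ∨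
          x ∈ Ioo (a/2 + 3*Real.sqrt ε) (a/2 + 4*Real.sqrt ε) ∨
          x ∈ Ioo (a/2 + 4*Real.sqrt ε) (1/2 : ℝ)) →
      0 ≤ 2*(deriv (F2A a ε) x)^2 + (1 - F2A a ε x) * deriv (deriv (F2A a ε)) x := by
  have ha9 : (9/10 : ℝ) ≤ a := by norm_num at ha; exact ha.1
  have hs : 0 < √ε := Real.sqrt_pos.2 hε
  have hs80 : √ε ≤ 1/80 := by linarith
  rintro x (⟨hx1, hx2⟩ | ⟨hx1, hx2⟩ | ⟨hx1, hx2⟩ | ⟨hx1, hx2⟩ | ⟨hx1, hx2⟩)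
  · exact regularity_nonneg_of_eventuallyEq_G23 (by linarith)
      ((F2A_eqOn_Iio a ε).eventuallyEq_of_mem (Iio_mem_nhds hx2))
  · exact regularity_nonneg_of_eventuallyEq_G23_sub_half_sq ⟨by linarith, by linarith⟩
      (abs_le.2 ⟨by linarith, by linarith⟩)
      ((F2A_eqOn_Ioo_left a ε).eventuallyEq_of_mem (Ioo_mem_nhds hx1 hx2))
  · exact regularity_nonneg_of_eventuallyEq_G23_sub_const_add_half_sq ⟨by linarith, by linarith⟩
      hε.le (abs_le.2 ⟨by linarith, by linarith⟩) hs80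
      ((F2A_eqOn_Ioo_mid a ε).eventuallyEq_of_mem (Ioo_mem_nhds hx1 hx2))
  · exact regularity_nonneg_of_eventuallyEq_G23_sub_half_sq ⟨by linarith, by linarith⟩
      (abs_le.2 ⟨by linarith, by linarith⟩)
      ((F2A_eqOn_Ioo_right a ε).eventuallyEq_of_mem (Ioo_mem_nhds hx1 hx2))
  · exact regularity_nonneg_of_eventuallyEq_G23 (by linarith)
      ((F2A_eqOn_Ioi a ε).eventuallyEq_of_mem (Ioi_mem_nhds hx1))

theorem stmt3 (a ε : ℝ) (ha : a ∈ Icc (0.9 : ℝ) 1) (hε : 0 < ε) (hε' : ε < 0.05)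
    (hfit : a/2 + 4*Real.sqrt ε ≤ 1/2) :
    ∀ x, (x ∈ Ioo (1/3 : ℝ) (a/2) ∨ x ∈ Ioo (a/2) (a/2 + Real.sqrt ε) ∨
          x ∈ Ioo (a/2 + Real.sqrt ε) (a/2 + 3*Real.sqrt ε) ∨
          x ∈ Ioo (a/2 + 3*Real.sqrt ε) (a/2 + 4*Real.sqrt ε) ∨
          x ∈ Ioo (a/2 + 4*Real.sqrt ε) (1/2 : ℝ)) →
      0 ≤ 2*(deriv (F2A a ε) x)^2 + (1 - F2A a ε x) * deriv (deriv (F2A a ε)) x :=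
  stmt3_general a ε ha hε hfit
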